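/- Let f: ℝ → ℝ be 1-periodic and measurable with f restricted to [0,1] square-integrable, and let g: ℝ → ℝ be an even measurable function such that Σ_{l=1}^{∞} l · sup_{|x|≤1} |g(x+l)| < ∞ and g is bounded on [-1,1]. Then (1/n) ∫_0^n ∫_0^n f(v_1) f(v_2) g(v_1 − v_2) dv_1 dv_2 → ∫_0^1 ∫_0^1 f(v_1) f(v_2) [ g(v_1 − v_2) + 2 Σ_{l=1}^{∞} g(v_1 − v_2 + l) ] dv_1 dv_2 as n → ∞. -/

import Mathlib

/-!
Cut `(0, n]²` into the unit cells `(j, j + 1] × (k, k + 1]`. Translating a cell back to `(0, 1]²`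
and using the periodicity of `f`, its integral is `c (j - k)`, where `c = cellIntegral f g` and
`c m = ∫∫_{(0,1]²} f x f y g (x - y + m)`. Since `g` is even so is `c`, and counting the pairs with
`j - k = ±(l + 1)` turns the double integral into `n c 0 + 2 ∑_{l<n} (n - (l + 1)) c (l + 1)`.
The bound `|c (l + 1)| ≤ M (l + 1) ‖f‖₁²` and `∑ l M l < ∞` make `∑ (l + 1) |c (l + 1)|`
finite, so after dividing by `n` only `c 0 + 2 ∑ c (l + 1)` survives; exchanging sum and integral
identifies this with the right-hand side.
-/

open MeasureTheory Set Filter Topology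

section Kernel

variable {f k : ℝ → ℝ} {s t : Set ℝ} {C : ℝ}

lemma ae_norm_mul_mul_comp_sub_le (hs : MeasurableSet s) (ht : MeasurableSet t)
    (hC : ∀ x ∈ s, ∀ y ∈ t, |k (x - y)| ≤ C) :
    ∀ᵐ p ∂volume.restrict (s ×ˢ t),
      ‖f p.1 * f p.2 * k (p.1 - p.2)‖ ≤ C * (|f p.1| * |f p.2|) := by
  filter_upwards [ae_restrict_mem (hs.prod ht)] with p ⟨hx, hy⟩
  rw [Real.norm_eq_abs, abs_mul, abs_mul, mul_comm C]
  exact mul_le_mul_of_nonneg_left (hC _ hx _ hy) (by positivity)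

lemma integrableOn_mul_mul_comp_sub (hk : Measurable k) (hs : MeasurableSet s)
    (ht : MeasurableSet t) (hfs : IntegrableOn f s) (hft : IntegrableOn f t)
    (hC : ∀ x ∈ s, ∀ y ∈ t, |k (x - y)| ≤ C) :
    IntegrableOn (fun p : ℝ × ℝ => f p.1 * f p.2 * k (p.1 - p.2)) (s ×ˢ t) := by
  have hprod : IntegrableOn (fun p : ℝ × ℝ => f p.1 * f p.2) (s ×ˢ t) := by
    rw [IntegrableOn, Measure.volume_eq_prod, ← Measure.prod_restrict]
    exact hfs.mul_prod hft
  have hmeas := hprod.aestronglyMeasurable.mul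
    (hk.comp (measurable_fst.sub measurable_snd)).aestronglyMeasurable
  refine Integrable.mono' (hprod.abs.const_mul C) hmeas
    ((ae_norm_mul_mul_comp_sub_le (f := f) hs ht hC).mono fun p hp => ?_)
  rwa [abs_mul]

lemma integral_norm_mul_mul_comp_sub_le (hk : Measurable k) (hs : MeasurableSet s)
    (ht : MeasurableSet t) (hfs : IntegrableOn f s) (hft : IntegrableOn f t)
    (hC : ∀ x ∈ s, ∀ y ∈ t, |k (x - y)| ≤ C) :
    ∫ p in s ×ˢ t, ‖f p.1 * f p.2 * k (p.1 - p.2)‖ ≤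
      C * ((∫ x in s, |f x|) * ∫ y in t, |f y|) := by
  calc ∫ p in s ×ˢ t, ‖f p.1 * f p.2 * k (p.1 - p.2)‖
      ≤ ∫ p in s ×ˢ t, C * (|f p.1| * |f p.2|) := by
        refine integral_mono_ae (integrableOn_mul_mul_comp_sub hk hs ht hfs hft hC).norm ?_
          (ae_norm_mul_mul_comp_sub_le hs ht hC)
        rw [Measure.volume_eq_prod ℝ ℝ, ← Measure.prod_restrict]
        exact (hfs.abs.mul_prod hft.abs).const_mul C
    _ = C * ((∫ x in s, |f x|) * ∫ y in t, |f y|) := by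
        rw [integral_const_mul, Measure.volume_eq_prod ℝ ℝ, ← Measure.prod_restrict,
          integral_prod_mul (fun x => |f x|) (fun y => |f y|)]

end Kernel

lemma intervalIntegral_intervalIntegral_eq_setIntegral_prod {F : ℝ → ℝ → ℝ} {a b c d : ℝ}
    (hab : a ≤ b) (hcd : c ≤ d)
    (hF : IntegrableOn (fun p : ℝ × ℝ => F p.1 p.2) (Ioc a b ×ˢ Ioc c d)) :
    ∫ x in a..b, ∫ y in c..d, F x y = ∫ p in Ioc a b ×ˢ Ioc c d, F p.1 p.2 := by
  simp only [intervalIntegral.integral_of_le hab, intervalIntegral.integral_of_le hcd]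
  rw [Measure.volume_eq_prod] at hF ⊢
  exact (setIntegral_prod _ hF).symm

lemma biUnion_range_Ioc_natCast (n : ℕ) :
    ⋃ j ∈ Finset.range n, Ioc (j : ℝ) (j + 1) = Ioc 0 (n : ℝ) := by
  induction n with
  | zero => simp
  | succ n ih =>
    rw [Finset.range_add_one, Finset.set_biUnion_insert, ih, union_comm,
      Ioc_union_Ioc_eq_Ioc (Nat.cast_nonneg n) (by simp)]
    push_cast; rfl

lemma pairwise_disjoint_Ioc_natCast :
    Pairwise (Function.onFun Disjoint fun j : ℕ => Ioc (j : ℝ) (j + 1)) := by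
  simpa using (Nat.mono_cast (α := ℝ)).pairwise_disjoint_on_Ioc_succ

lemma setIntegral_Ioc_prod_Ioc_eq_sum {F : ℝ × ℝ → ℝ} (n : ℕ)
    (hF : IntegrableOn F (Ioc 0 (n : ℝ) ×ˢ Ioc 0 (n : ℝ))) :
    ∫ p in Ioc 0 (n : ℝ) ×ˢ Ioc 0 (n : ℝ), F p =
      ∑ j ∈ Finset.range n, ∑ k ∈ Finset.range n,
        ∫ p in Ioc (j : ℝ) (j + 1) ×ˢ Ioc (k : ℝ) (k + 1), F p := by
  have hcells : Ioc 0 (n : ℝ) ×ˢ Ioc 0 (n : ℝ) = ⋃ jk ∈ Finset.range n ×ˢ Finset.range n,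
      Ioc (jk.1 : ℝ) (jk.1 + 1) ×ˢ Ioc (jk.2 : ℝ) (jk.2 + 1) := by
    ext p
    simp only [← biUnion_range_Ioc_natCast n, mem_prod, mem_iUnion, Finset.mem_product,
      exists_prop, Prod.exists]
    aesop
  rw [hcells, integral_biUnion_finset, Finset.sum_product]
  · exact fun _ _ => measurableSet_Ioc.prod measurableSet_Ioc
  · rintro ⟨j, k⟩ - ⟨j', k'⟩ - hne
    rw [Function.onFun, Set.disjoint_prod]
    by_cases hj : j = j'
    · exact Or.inr (pairwise_disjoint_Ioc_natCast fun hk => hne (Prod.ext hj hk))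
    · exact Or.inl (pairwise_disjoint_Ioc_natCast hj)
  · intro jk hjk
    refine hF.mono_set ?_
    rw [hcells]
    exact fun p hp => mem_iUnion₂_of_mem hjk hp

lemma setIntegral_Ioc_prod_Ioc_eq_unitSquare (F : ℝ × ℝ → ℝ) (a b : ℝ) :
    ∫ p in Ioc a (a + 1) ×ˢ Ioc b (b + 1), F p =
      ∫ p in Ioc 0 1 ×ˢ Ioc 0 1, F (p + (a, b)) := by
  rw [← (measurePreserving_add_right volume (a, b)).setIntegral_preimage_emb
    (measurableEmbedding_addRight _)]
  congr 2
  ext p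
  simp only [mem_preimage, mem_prod, Prod.fst_add, Prod.snd_add, mem_Ioc]
  constructor <;> rintro ⟨⟨_, _⟩, _, _⟩ <;> refine ⟨⟨?_, ?_⟩, ?_, ?_⟩ <;> linarith

lemma Function.Periodic.integrableOn_Ioc_of_integrableOn_Icc {f : ℝ → ℝ}
    (hfper : Function.Periodic f 1) (hf : IntegrableOn f (Icc 0 1)) (a b : ℝ) :
    IntegrableOn f (Ioc a b) := by
  have h01 : IntervalIntegrable f volume 0 1 := by
    rwa [intervalIntegrable_iff_integrableOn_Icc_of_le zero_le_one]
  exact (hfper.intervalIntegrable₀ one_ne_zero h01 a b).1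

section Bounds

variable {g : ℝ → ℝ} {M : ℕ → ℝ}

lemma abs_le_of_even_of_abs_add_natCast_le (hgeven : ∀ x, g (-x) = g x)
    (hM : ∀ l : ℕ, 1 ≤ l → ∀ x ∈ Icc (-1 : ℝ) 1, |g (x + l)| ≤ M l) (x : ℝ) :
    |g x| ≤ M (⌊|x|⌋₊ + 1) := by
  have hx : g x = g |x| := by
    rcases abs_cases x with ⟨h, -⟩ | ⟨h, -⟩ <;> simp [h, hgeven]
  have hfloor : |x| - (⌊|x|⌋₊ + 1 : ℕ) ∈ Icc (-1 : ℝ) 1 := by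
    push_cast
    constructor <;> linarith [Nat.floor_le (abs_nonneg x), Nat.lt_floor_add_one |x|]
  simpa [hx] using hM (⌊|x|⌋₊ + 1) (Nat.le_add_left 1 _) _ hfloor

lemma exists_abs_le_of_even_of_abs_add_natCast_le (hgeven : ∀ x, g (-x) = g x)
    (hM : ∀ l : ℕ, 1 ≤ l → ∀ x ∈ Icc (-1 : ℝ) 1, |g (x + l)| ≤ M l) (R : ℝ) :
    ∃ C, ∀ x, |x| ≤ R → |g x| ≤ C := by
  refine ⟨∑ l ∈ Finset.range (⌊R⌋₊ + 1), M (l + 1), fun x hx =>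
    (abs_le_of_even_of_abs_add_natCast_le hgeven hM x).trans ?_⟩
  refine Finset.single_le_sum (f := fun l => M (l + 1)) (fun l _ => ?_)
    (Finset.mem_range.2 (Nat.lt_succ_of_le (Nat.floor_le_floor hx)))
  exact (abs_nonneg _).trans (hM (l + 1) (Nat.le_add_left 1 l) 0 (by simp))

end Bounds

lemma sum_range_sum_range_sub_of_even (d : ℤ → ℝ) (hd : ∀ m, d (-m) = d m) (n : ℕ) :
    ∑ j ∈ Finset.range n, ∑ k ∈ Finset.range n, d (j - k) =
      n * d 0 + 2 * ∑ l ∈ Finset.range n, ((n : ℝ) - (l + 1)) * d (l + 1) := by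
  induction n with
  | zero => simp
  | succ n ih =>
    have hrow : ∑ k ∈ Finset.range n, d (n - k) = ∑ l ∈ Finset.range n, d (l + 1) := by
      rw [← Finset.sum_range_reflect]
      refine Finset.sum_congr rfl fun k hk => congrArg d ?_
      have := Finset.mem_range.1 hk
      omega
    have hcol : ∑ j ∈ Finset.range n, d (j - n) = ∑ l ∈ Finset.range n, d (l + 1) := by
      rw [← hrow]
      exact Finset.sum_congr rfl fun j _ => by rw [← hd, neg_sub]
    have hweights : ∑ l ∈ Finset.range n, ((n + 1 : ℝ) - (l + 1)) * d (l + 1) =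
        ∑ l ∈ Finset.range n, ((n : ℝ) - (l + 1)) * d (l + 1) +
          ∑ l ∈ Finset.range n, d (l + 1) := by
      rw [← Finset.sum_add_distrib]
      exact Finset.sum_congr rfl fun l _ => by ring
    simp only [Finset.sum_range_succ, Finset.sum_add_distrib, hrow, hcol, ih, sub_self]
    push_cast
    rw [hweights]
    ring

lemma tendsto_inv_mul_sum_range_sub_mul {a : ℕ → ℝ}
    (ha : Summable fun l : ℕ => ((l : ℝ) + 1) * a l) :
    Tendsto (fun n : ℕ => (n : ℝ)⁻¹ * ∑ l ∈ Finset.range n, ((n : ℝ) - (l + 1)) * a l)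
      atTop (𝓝 (∑' l, a l)) := by
  have hsum : Summable a := ha.norm.of_norm_bounded fun l => by
    rw [norm_mul, Real.norm_of_nonneg (by positivity : (0 : ℝ) ≤ l + 1)]
    exact le_mul_of_one_le_left (norm_nonneg _) (by simp)
  have hmoment : Tendsto (fun n : ℕ => (n : ℝ)⁻¹ * ∑ l ∈ Finset.range n, ((l : ℝ) + 1) * a l)
      atTop (𝓝 0) := by
    simpa using (tendsto_inv_atTop_nhds_zero_nat (𝕜 := ℝ)).mul ha.hasSum.tendsto_sum_nat
  have hlim := hsum.hasSum.tendsto_sum_nat.sub hmoment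
  rw [sub_zero] at hlim
  refine hlim.congr' ?_
  filter_upwards [eventually_ne_atTop 0] with n hn
  rw [Finset.mul_sum, Finset.mul_sum, ← Finset.sum_sub_distrib]
  refine Finset.sum_congr rfl fun l _ => ?_
  field_simp

noncomputable def cellIntegral (f g : ℝ → ℝ) (m : ℤ) : ℝ :=
  ∫ p in Ioc (0 : ℝ) 1 ×ˢ Ioc (0 : ℝ) 1, f p.1 * f p.2 * g (p.1 - p.2 + m)

lemma forall_mem_Ioc_sub_mem_Icc {P : ℝ → Prop} (h : ∀ z ∈ Icc (-1 : ℝ) 1, P z) :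
    ∀ x ∈ Ioc (0 : ℝ) 1, ∀ y ∈ Ioc (0 : ℝ) 1, P (x - y) :=
  fun _ hx _ hy => h _ ⟨by linarith [hx.1, hy.2], by linarith [hx.2, hy.1]⟩

section Cell

variable {f g : ℝ → ℝ}

lemma cellIntegral_neg (hgeven : ∀ x, g (-x) = g x) (m : ℤ) :
    cellIntegral f g (-m) = cellIntegral f g m := by
  simp only [cellIntegral, Measure.volume_eq_prod ℝ ℝ, ← Measure.prod_restrict]
  rw [← integral_prod_swap]
  congr 1
  ext p
  rw [Prod.fst_swap, Prod.snd_swap, Int.cast_neg, ← hgeven]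
  ring_nf

variable {C : ℝ} {m : ℝ}

lemma integrableOn_unitSquare (hgmeas : Measurable g) (hf : IntegrableOn f (Ioc 0 1))
    (hC : ∀ z ∈ Icc (-1 : ℝ) 1, |g (z + m)| ≤ C) :
    IntegrableOn (fun p : ℝ × ℝ => f p.1 * f p.2 * g (p.1 - p.2 + m)) (Ioc 0 1 ×ˢ Ioc 0 1) :=
  integrableOn_mul_mul_comp_sub (k := fun z => g (z + m)) (hgmeas.comp (measurable_add_const m))
    measurableSet_Ioc measurableSet_Ioc hf hf (forall_mem_Ioc_sub_mem_Icc hC)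

lemma integral_norm_unitSquare_le (hgmeas : Measurable g) (hf : IntegrableOn f (Ioc 0 1))
    (hC : ∀ z ∈ Icc (-1 : ℝ) 1, |g (z + m)| ≤ C) :
    ∫ p in Ioc 0 1 ×ˢ Ioc 0 1, ‖f p.1 * f p.2 * g (p.1 - p.2 + m)‖ ≤
      C * (∫ x in Ioc 0 1, |f x|) ^ 2 := by
  rw [sq]
  exact integral_norm_mul_mul_comp_sub_le (k := fun z => g (z + m))
    (hgmeas.comp (measurable_add_const m)) measurableSet_Ioc measurableSet_Ioc hf hf
    (forall_mem_Ioc_sub_mem_Icc hC)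

lemma abs_cellIntegral_le (hgmeas : Measurable g) (hf : IntegrableOn f (Ioc 0 1)) {n : ℤ}
    (hC : ∀ z ∈ Icc (-1 : ℝ) 1, |g (z + n)| ≤ C) :
    |cellIntegral f g n| ≤ C * (∫ x in Ioc 0 1, |f x|) ^ 2 :=
  (norm_integral_le_integral_norm _).trans (integral_norm_unitSquare_le hgmeas hf hC)

lemma summable_mul_cellIntegral_add_one (hgmeas : Measurable g) (hf : IntegrableOn f (Ioc 0 1))
    {M : ℕ → ℝ} (hM : ∀ l : ℕ, ∀ z ∈ Icc (-1 : ℝ) 1, |g (z + (l + 1))| ≤ M l)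
    (hMsum : Summable fun l : ℕ => ((l : ℝ) + 1) * M l) :
    Summable fun l : ℕ => ((l : ℝ) + 1) * cellIntegral f g (l + 1) :=
  (hMsum.mul_right _).of_norm_bounded fun l => by
    rw [norm_mul, Real.norm_eq_abs, Real.norm_eq_abs, abs_of_nonneg (by positivity), mul_assoc]
    exact mul_le_mul_of_nonneg_left
      (abs_cellIntegral_le hgmeas hf fun z hz => by exact_mod_cast hM l z hz) (by positivity)

lemma setIntegral_Ioc_prod_Ioc_eq_cellIntegral (hfper : Function.Periodic f 1) (j k : ℕ) :
    ∫ p in Ioc (j : ℝ) (j + 1) ×ˢ Ioc (k : ℝ) (k + 1), f p.1 * f p.2 * g (p.1 - p.2) =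
      cellIntegral f g (j - k) := by
  rw [setIntegral_Ioc_prod_Ioc_eq_unitSquare, cellIntegral]
  congr 1
  ext p
  simp only [Prod.fst_add, Prod.snd_add]
  have hj : f (p.1 + j) = f p.1 := by simpa using hfper.nat_mul j p.1
  have hk : f (p.2 + k) = f p.2 := by simpa using hfper.nat_mul k p.2
  rw [hj, hk]
  push_cast
  ring_nf

lemma intervalIntegral_intervalIntegral_eq_sum_cellIntegral (hfper : Function.Periodic f 1)
    (hgmeas : Measurable g) (n : ℕ) (hf : IntegrableOn f (Ioc 0 n))
    (hC : ∀ x : ℝ, |x| ≤ n → |g x| ≤ C) :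
    ∫ v₁ in (0 : ℝ)..n, ∫ v₂ in (0 : ℝ)..n, f v₁ * f v₂ * g (v₁ - v₂) =
      ∑ j ∈ Finset.range n, ∑ k ∈ Finset.range n, cellIntegral f g (j - k) := by
  have hint := integrableOn_mul_mul_comp_sub hgmeas measurableSet_Ioc measurableSet_Ioc hf hf
    fun x hx y hy =>
      hC _ (abs_sub_le_iff.2 ⟨by linarith [hx.2, hy.1], by linarith [hx.1, hy.2]⟩)
  rw [intervalIntegral_intervalIntegral_eq_setIntegral_prod
      (F := fun x y => f x * f y * g (x - y)) n.cast_nonneg n.cast_nonneg hint,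
    setIntegral_Ioc_prod_Ioc_eq_sum n hint]
  simp_rw [setIntegral_Ioc_prod_Ioc_eq_cellIntegral hfper]

lemma intervalIntegral_intervalIntegral_eq_cellIntegral_add_tsum (hgmeas : Measurable g)
    (hf : IntegrableOn f (Ioc 0 1)) {B : ℝ} (hB : ∀ z ∈ Icc (-1 : ℝ) 1, |g z| ≤ B) {M : ℕ → ℝ}
    (hM : ∀ l : ℕ, ∀ z ∈ Icc (-1 : ℝ) 1, |g (z + (l + 1))| ≤ M l) (hMsum : Summable M) :
    ∫ v₁ in (0 : ℝ)..1, ∫ v₂ in (0 : ℝ)..1,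
        f v₁ * f v₂ * (g (v₁ - v₂) + 2 * ∑' l : ℕ, g (v₁ - v₂ + ((l : ℝ) + 1))) =
      cellIntegral f g 0 + 2 * ∑' l : ℕ, cellIntegral f g (l + 1) := by
  set S : ℝ → ℝ := fun z => ∑' l : ℕ, g (z + ((l : ℝ) + 1))
  have hS : ∀ z ∈ Icc (-1 : ℝ) 1, |S z| ≤ ∑' l, M l := fun z hz =>
    tsum_of_norm_bounded (f := fun l : ℕ => g (z + ((l : ℝ) + 1))) hMsum.hasSum
      fun l => hM l z hz
  have h0 : IntegrableOn (fun p : ℝ × ℝ => f p.1 * f p.2 * g (p.1 - p.2))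
      (Ioc 0 1 ×ˢ Ioc 0 1) := by
    simpa using integrableOn_unitSquare (m := 0) hgmeas hf (by simpa using hB)
  have hSint : IntegrableOn (fun p : ℝ × ℝ => f p.1 * f p.2 * S (p.1 - p.2))
      (Ioc 0 1 ×ˢ Ioc 0 1) :=
    integrableOn_mul_mul_comp_sub
      (Measurable.tsum fun l => hgmeas.comp (measurable_add_const _)) measurableSet_Ioc
      measurableSet_Ioc hf hf (forall_mem_Ioc_sub_mem_Icc hS)
  have hseries : HasSum (fun l : ℕ => cellIntegral f g (l + 1))
      (∫ p in Ioc 0 1 ×ˢ Ioc 0 1, f p.1 * f p.2 * S (p.1 - p.2)) := by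
    have hnorm : Summable fun l : ℕ => ∫ p in Ioc 0 1 ×ˢ Ioc 0 1,
        ‖f p.1 * f p.2 * g (p.1 - p.2 + ((l : ℝ) + 1))‖ :=
      (hMsum.mul_right _).of_nonneg_of_le (fun _ => integral_nonneg fun _ => norm_nonneg _)
        fun l => integral_norm_unitSquare_le hgmeas hf (hM l)
    have h := hasSum_integral_of_summable_integral_norm
      (fun l => integrableOn_unitSquare hgmeas hf (hM l)) hnorm
    have hS' : ∀ p : ℝ × ℝ, ∑' l : ℕ, f p.1 * f p.2 * g (p.1 - p.2 + ((l : ℝ) + 1)) =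
        f p.1 * f p.2 * S (p.1 - p.2) := fun p => tsum_mul_left
    simp only [hS'] at h
    simpa [cellIntegral] using h
  have hsplit : (fun p : ℝ × ℝ => f p.1 * f p.2 * (g (p.1 - p.2) + 2 * S (p.1 - p.2))) =
      fun p => f p.1 * f p.2 * g (p.1 - p.2) + 2 * (f p.1 * f p.2 * S (p.1 - p.2)) := by
    ext p
    ring
  show ∫ v₁ in (0 : ℝ)..1, ∫ v₂ in (0 : ℝ)..1, f v₁ * f v₂ * (g (v₁ - v₂) + 2 * S (v₁ - v₂)) = _
  rw [intervalIntegral_intervalIntegral_eq_setIntegral_prod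
      (F := fun x y => f x * f y * (g (x - y) + 2 * S (x - y))) zero_le_one zero_le_one
      (hsplit ▸ h0.add (hSint.const_mul 2)), hsplit, integral_add h0 (hSint.const_mul 2),
    integral_const_mul, hseries.tsum_eq]
  simp [cellIntegral]

end Cell

theorem stmt_5_general (f g : ℝ → ℝ)
    (hfper : ∀ x : ℝ, f (x + 1) = f x)
    (hfL2 : MemLp f 2 (volume.restrict (Set.Icc (0:ℝ) 1)))
    (hgmeas : Measurable g) (hgeven : ∀ x, g (-x) = g x)
    (M : ℕ → ℝ)
    (hM : ∀ l : ℕ, 1 ≤ l → ∀ x ∈ Set.Icc (-1:ℝ) 1, |g (x + (l : ℝ))| ≤ M l)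
    (hMsum : Summable (fun l : ℕ => (l : ℝ) * M l)) :
    Filter.Tendsto
      (fun n : ℕ =>
        (1 / (n : ℝ)) *
          ∫ v₁ in (0:ℝ)..(n : ℝ), ∫ v₂ in (0:ℝ)..(n : ℝ),
            f v₁ * f v₂ * g (v₁ - v₂))
      Filter.atTop
      (nhds (∫ v₁ in (0:ℝ)..1, ∫ v₂ in (0:ℝ)..1,
        f v₁ * f v₂ *
          (g (v₁ - v₂) + 2 * ∑' l : ℕ, g (v₁ - v₂ + ((l : ℝ) + 1))))) := by
  have hf : ∀ a b, IntegrableOn f (Ioc a b) :=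
    Function.Periodic.integrableOn_Ioc_of_integrableOn_Icc hfper (hfL2.integrable one_le_two)
  have hM' : ∀ l : ℕ, ∀ x ∈ Icc (-1 : ℝ) 1, |g (x + ((l : ℝ) + 1))| ≤ M (l + 1) :=
    fun l x hx => by exact_mod_cast hM (l + 1) l.succ_pos x hx
  have hMsum' : Summable fun l : ℕ => ((l : ℝ) + 1) * M (l + 1) := by
    exact_mod_cast (summable_nat_add_iff 1).2 hMsum
  have hM'_nonneg : ∀ l : ℕ, 0 ≤ M (l + 1) := fun l => (abs_nonneg _).trans (hM' l 0 (by simp))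
  obtain ⟨B, hB⟩ := exists_abs_le_of_even_of_abs_add_natCast_le hgeven hM 1
  rw [intervalIntegral_intervalIntegral_eq_cellIntegral_add_tsum hgmeas (hf 0 1)
    (fun z hz => hB z (abs_le.2 hz)) hM'
    (hMsum'.of_nonneg_of_le hM'_nonneg fun l => le_mul_of_one_le_left (hM'_nonneg l) (by simp))]
  have hlim := (tendsto_inv_mul_sum_range_sub_mul
    (summable_mul_cellIntegral_add_one hgmeas (hf 0 1) hM' hMsum')).const_mul 2
  refine (hlim.const_add (cellIntegral f g 0)).congr' ?_
  filter_upwards [eventually_ne_atTop 0] with n hn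
  obtain ⟨C, hC⟩ := exists_abs_le_of_even_of_abs_add_natCast_le hgeven hM n
  rw [intervalIntegral_intervalIntegral_eq_sum_cellIntegral hfper hgmeas n (hf 0 n) hC,
    sum_range_sum_range_sub_of_even _ (cellIntegral_neg hgeven)]
  field_simp

/-- Variance asymptotics: if `f` is 1-periodic and square integrable on `[0,1]`,
and `g` is even, bounded on `[-1,1]`, with `∑_l l · sup_{|x|≤1}|g(x+l)| < ∞`,
then `(1/n)∫_0^n∫_0^n f(v₁)f(v₂)g(v₁−v₂) dv₁dv₂` converges to
`∫_0^1∫_0^1 f(v₁)f(v₂)[g(v₁−v₂) + 2∑_{l≥1} g(v₁−v₂+l)] dv₁dv₂`. -/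
theorem stmt_5 (f g : ℝ → ℝ)
    (hfper : ∀ x : ℝ, f (x + 1) = f x) (hfmeas : Measurable f)
    (hfL2 : MemLp f 2 (volume.restrict (Set.Icc (0:ℝ) 1)))
    (hgmeas : Measurable g) (hgeven : ∀ x, g (-x) = g x)
    (hgbdd : ∃ B : ℝ, ∀ x ∈ Set.Icc (-1:ℝ) 1, |g x| ≤ B)
    (M : ℕ → ℝ)
    (hM : ∀ l : ℕ, 1 ≤ l → ∀ x ∈ Set.Icc (-1:ℝ) 1, |g (x + (l : ℝ))| ≤ M l)
    (hMsum : Summable (fun l : ℕ => (l : ℝ) * M l)) :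
    Filter.Tendsto
      (fun n : ℕ =>
        (1 / (n : ℝ)) *
          ∫ v₁ in (0:ℝ)..(n : ℝ), ∫ v₂ in (0:ℝ)..(n : ℝ),
            f v₁ * f v₂ * g (v₁ - v₂))
      Filter.atTop
      (nhds (∫ v₁ in (0:ℝ)..1, ∫ v₂ in (0:ℝ)..1,
        f v₁ * f v₂ *
          (g (v₁ - v₂) + 2 * ∑' l : ℕ, g (v₁ - v₂ + ((l : ℝ) + 1))))) :=
  stmt_5_general f g hfper hfL2 hgmeas hgeven M hM hMsum
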